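/- Let H be a commutative bialgebra and A a commutative right H-comodule algebra. For grouplike X of A⊗H set A_X = {a ∈ A : ρ(a) = aX}. Then: A_{1⊗1} = A^{co H}; A_X · A_Y ⊆ A_{XY} for grouplike X, Y; and the set E = {X ∈ G^i(A⊗H) : A·A_X = A and A·A_{X^{-1}} = A} is a subgroup of G^i(A⊗H) containing the image of d : G_m(A) → G^i(A⊗H). -/

import Mathlib

open TensorProduct

universe u

/-- A commutative right `H`-comodule algebra: a commutative `k`-algebra `A` together with
a coassociative counital coaction `ρ : A → A ⊗ H` which is an algebra map. -/
structure ComodAlg (k H A : Type u) [CommRing k] [Ring H] [Bialgebra k H]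
    [CommRing A] [Algebra k A] : Type u where
  ρ : A →ₐ[k] A ⊗[k] H
  counit_comp : ∀ a : A,
    (TensorProduct.rid k A) ((LinearMap.lTensor A (Coalgebra.counit (R := k) (A := H))) (ρ a)) = a
  coassoc : ∀ a : A,
    (LinearMap.lTensor A (Coalgebra.comul (R := k) (A := H))) (ρ a)
      = (TensorProduct.assoc k A H H) ((LinearMap.rTensor H ρ.toLinearMap) (ρ a))

namespace ComodAlg

variable {k H A : Type u} [CommRing k] [Ring H] [Bialgebra k H]
  [CommRing A] [Algebra k A] (c : ComodAlg k H A)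

/-- The subset of coinvariant elements `B = A^{co H}`. -/
def coinvSet : Set A := {a : A | c.ρ a = a ⊗ₜ[k] 1}

/-- The coinvariants `B = A^{co H}` as a subalgebra of `A`. -/
def coinvAlg : Subalgebra k A where
  carrier := c.coinvSet
  mul_mem' {a} {b} ha hb := by
    simp only [coinvSet, Set.mem_setOf_eq] at *
    rw [map_mul, ha, hb, Algebra.TensorProduct.tmul_mul_tmul, mul_one]
  add_mem' {a} {b} ha hb := by
    simp only [coinvSet, Set.mem_setOf_eq] at *
    rw [map_add, ha, hb, ← add_tmul]
  algebraMap_mem' r := by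
    simp only [coinvSet, Set.mem_setOf_eq, AlgHom.commutes,
      Algebra.TensorProduct.algebraMap_apply]

end ComodAlg

namespace ComodAlg

variable {k H A : Type u} [CommRing k] [CommRing H] [Bialgebra k H]
  [CommRing A] [Algebra k A] (c : ComodAlg k H A)

/-- `Σ aᵢ ⊗ (hᵢ)₍₁₎ ⊗ (hᵢ)₍₂₎`, the comultiplication of the coring `A ⊗ H` applied to `x`,
written in `(A ⊗ H) ⊗ H` via the canonical identification `(A ⊗ H) ⊗_A (A ⊗ H) ≅ A ⊗ H ⊗ H`. -/
noncomputable def coact2 : A ⊗[k] H →ₗ[k] (A ⊗[k] H) ⊗[k] H :=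
  (TensorProduct.assoc k A H H).symm.toLinearMap ∘ₗ
    LinearMap.lTensor A (Coalgebra.comul (R := k) (A := H))

/-- `Σ_{i,j} aᵢ (a_j)₍₀₎ ⊗ hᵢ (a_j)₍₁₎ ⊗ h_j`, the image of `x ⊗_A x` under the canonical
identification `(A ⊗ H) ⊗_A (A ⊗ H) ≅ A ⊗ H ⊗ H`. -/
noncomputable def sqRHS (x : A ⊗[k] H) : (A ⊗[k] H) ⊗[k] H :=
  (LinearMap.rTensor H (LinearMap.mulLeft k x)) ((LinearMap.rTensor H c.ρ.toLinearMap) x)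

/-- `x` is a grouplike element of the `A`-coring `A ⊗ H`; equivalently, `x` is a
normalized Harrison 1-cocycle. -/
noncomputable def IsGrouplike (x : A ⊗[k] H) : Prop :=
  coact2 x = c.sqRHS x ∧
    (TensorProduct.rid k A) ((LinearMap.lTensor A (Coalgebra.counit (R := k) (A := H))) x) = 1

/-- The map `d : 𝔾ₘ(A) → Gⁱ(A ⊗ H)`, `d(a) = a⁻¹ a₍₀₎ ⊗ a₍₁₎`. -/
noncomputable def d (a : Aˣ) : A ⊗[k] H := (((↑a⁻¹ : A) ⊗ₜ[k] (1 : H)) : A ⊗[k] H) * c.ρ ↑a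

end ComodAlg

namespace ComodAlg

variable {k H A : Type u} [CommRing k] [CommRing H] [Bialgebra k H]
  [CommRing A] [Algebra k A] (c : ComodAlg k H A)

/-- `A_X = {a ∈ A | ρ(a) = aX}`. -/
def AX (x : A ⊗[k] H) : Set A := {a : A | c.ρ a = (a ⊗ₜ[k] (1 : H) : A ⊗[k] H) * x}

/-- The subset `E` of `Gⁱ(A ⊗ H)`: invertible grouplike elements `X` with
`A·A_X = A` and `A·A_{X⁻¹} = A`. -/
noncomputable def Eset : Set (A ⊗[k] H)ˣ :=
  {u : (A ⊗[k] H)ˣ | c.IsGrouplike ↑u ∧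
    Ideal.span (c.AX ↑u) = ⊤ ∧ Ideal.span (c.AX ↑u⁻¹) = ⊤}

end ComodAlg


namespace MyAux

variable {k H A : Type u} [CommRing k] [CommRing H] [Bialgebra k H]
  [CommRing A] [Algebra k A]

/-- `ρ ⊗ id` as an algebra map. -/
noncomputable def rhoT (ρ : A →ₐ[k] A ⊗[k] H) : A ⊗[k] H →ₐ[k] (A ⊗[k] H) ⊗[k] H :=
  Algebra.TensorProduct.map ρ (AlgHom.id k H)

lemma rTensor_rho_eq (ρ : A →ₐ[k] A ⊗[k] H) (x : A ⊗[k] H) :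
    LinearMap.rTensor H ρ.toLinearMap x = rhoT ρ x := by
  induction x using TensorProduct.induction_on with
  | zero => simp
  | tmul a h => simp [rhoT]
  | add p q hp hq => simp [hp, hq]

/-- `(id ⊗ Δ)` followed by the inverse associator, as an algebra map. -/
noncomputable def coactAlg : A ⊗[k] H →ₐ[k] (A ⊗[k] H) ⊗[k] H :=
  ((Algebra.TensorProduct.assoc k k k A H H).symm.toAlgHom).comp
    (Algebra.TensorProduct.map (AlgHom.id k A) (Bialgebra.comulAlgHom k H))

lemma assoc_symm_eq (z : A ⊗[k] (H ⊗[k] H)) :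
    (TensorProduct.assoc k A H H).symm z = (Algebra.TensorProduct.assoc k k k A H H).symm z := rfl

/-- counit map as algebra map. -/
noncomputable def epsA : A ⊗[k] H →ₐ[k] A :=
  (Algebra.TensorProduct.rid k k A).toAlgHom.comp
    (Algebra.TensorProduct.map (AlgHom.id k A) (Bialgebra.counitAlgHom k H))

lemma eps_eq (x : A ⊗[k] H) :
    (TensorProduct.rid k A) ((LinearMap.lTensor A (Coalgebra.counit (R := k) (A := H))) x)
      = epsA x := by
  induction x using TensorProduct.induction_on with
  | zero => simp
  | tmul a h => simp [epsA, Bialgebra.counitAlgHom, Algebra.TensorProduct.rid_tmul]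
  | add p q hp hq => simp [hp, hq]

lemma rTensor_mulLeft (x : A ⊗[k] H) (w : (A ⊗[k] H) ⊗[k] H) :
    LinearMap.rTensor H (LinearMap.mulLeft k x) w = (x ⊗ₜ[k] (1 : H)) * w := by
  induction w using TensorProduct.induction_on with
  | zero => simp
  | tmul p h => simp [Algebra.TensorProduct.tmul_mul_tmul]
  | add p q hp hq => simp [hp, hq, mul_add]

end MyAux

namespace MyAux

variable {k H A : Type u} [CommRing k] [CommRing H] [Bialgebra k H]
  [CommRing A] [Algebra k A] (c : ComodAlg k H A)

lemma coact2_eq (x : A ⊗[k] H) :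
    ComodAlg.coact2 (k := k) (H := H) (A := A) x = coactAlg x := by
  induction x using TensorProduct.induction_on with
  | zero => simp
  | tmul a h =>
      simp [ComodAlg.coact2, coactAlg, Bialgebra.comulAlgHom, assoc_symm_eq]
  | add p q hp hq => simp [hp, hq]

lemma sqRHS_eq (x : A ⊗[k] H) :
    c.sqRHS x = (x ⊗ₜ[k] (1 : H)) * rhoT c.ρ x := by
  rw [ComodAlg.sqRHS, rTensor_rho_eq, rTensor_mulLeft]

lemma gl_iff (x : A ⊗[k] H) :
    c.IsGrouplike x ↔ (coactAlg x = (x ⊗ₜ[k] (1 : H)) * rhoT c.ρ x ∧ epsA x = 1) := by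
  rw [ComodAlg.IsGrouplike, coact2_eq, sqRHS_eq, eps_eq]

lemma tmul_one_mul (x y : A ⊗[k] H) :
    ((x * y) ⊗ₜ[k] (1 : H) : (A ⊗[k] H) ⊗[k] H) = (x ⊗ₜ[k] 1) * (y ⊗ₜ[k] 1) := by
  rw [Algebra.TensorProduct.tmul_mul_tmul, mul_one]

lemma tmul_one_mul' (a b : A) :
    ((a * b) ⊗ₜ[k] (1 : H) : A ⊗[k] H) = (a ⊗ₜ[k] 1) * (b ⊗ₜ[k] 1) := by
  rw [Algebra.TensorProduct.tmul_mul_tmul, mul_one]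

lemma one_tmul_one : ((1 : A ⊗[k] H) ⊗ₜ[k] (1 : H) : (A ⊗[k] H) ⊗[k] H) = 1 := rfl

lemma gl_one : c.IsGrouplike 1 := by
  rw [gl_iff]
  refine ⟨?_, by rw [map_one]⟩
  rw [map_one, map_one, mul_one, one_tmul_one]

lemma gl_mul {x y : A ⊗[k] H} (hx : c.IsGrouplike x) (hy : c.IsGrouplike y) :
    c.IsGrouplike (x * y) := by
  rw [gl_iff] at *
  obtain ⟨hx1, hx2⟩ := hx
  obtain ⟨hy1, hy2⟩ := hy
  refine ⟨?_, by rw [map_mul, hx2, hy2, mul_one]⟩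
  rw [map_mul, hx1, hy1, map_mul, tmul_one_mul]
  ring

lemma sq_mul_sq {x y : A ⊗[k] H} (hxy : x * y = 1) :
    ((x ⊗ₜ[k] (1 : H)) * rhoT c.ρ x) * ((y ⊗ₜ[k] (1 : H)) * rhoT c.ρ y) = 1 := by
  have h : ((x ⊗ₜ[k] (1 : H)) * rhoT c.ρ x) * ((y ⊗ₜ[k] (1 : H)) * rhoT c.ρ y)
      = (((x * y) ⊗ₜ[k] (1 : H)) : (A ⊗[k] H) ⊗[k] H) * rhoT c.ρ (x * y) := by
    rw [tmul_one_mul, map_mul]; ring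
  rw [h, hxy, map_one, mul_one, one_tmul_one]

lemma gl_of_inv {x y : A ⊗[k] H} (hxy : x * y = 1) (hx : c.IsGrouplike x)
    (h1 : coactAlg x * coactAlg y = 1) (h2 : epsA y = 1) : c.IsGrouplike y := by
  rw [gl_iff] at hx ⊢
  obtain ⟨hx1, _⟩ := hx
  have key := sq_mul_sq c hxy
  refine ⟨?_, h2⟩
  rw [hx1] at h1
  have hu : IsUnit ((x ⊗ₜ[k] (1 : H)) * rhoT c.ρ x) := IsUnit.of_mul_eq_one _ key
  obtain ⟨u, hu⟩ := hu
  have e1 : coactAlg y = ↑u⁻¹ := by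
    apply Units.eq_inv_of_mul_eq_one_left
    rw [hu]; exact h1
  have e2 : ((y ⊗ₜ[k] (1 : H)) * rhoT c.ρ y) = ↑u⁻¹ := by
    apply Units.eq_inv_of_mul_eq_one_left
    rw [hu]; exact key
  rw [e1, e2]

lemma AX_mul {x y : A ⊗[k] H} {a b : A} (ha : a ∈ c.AX x) (hb : b ∈ c.AX y) :
    a * b ∈ c.AX (x * y) := by
  simp only [ComodAlg.AX, Set.mem_setOf_eq] at *
  rw [map_mul, ha, hb, tmul_one_mul']
  ring

lemma span_AX_mul {x y : A ⊗[k] H} (hx : Ideal.span (c.AX x) = ⊤)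
    (hy : Ideal.span (c.AX y) = ⊤) : Ideal.span (c.AX (x * y)) = ⊤ := by
  have h1 : Ideal.span (c.AX x) * Ideal.span (c.AX y) ≤ Ideal.span (c.AX (x * y)) := by
    rw [Ideal.span_mul_span']
    apply Ideal.span_mono
    rintro z hz
    obtain ⟨a, ha, b, hb, rfl⟩ := Set.mem_mul.mp hz
    exact AX_mul c ha hb
  rw [hx, hy, Ideal.mul_top] at h1
  exact top_le_iff.mp h1

lemma coactAlg_tmul_one (b : A) :
    coactAlg ((b ⊗ₜ[k] (1 : H)) : A ⊗[k] H) = (b ⊗ₜ[k] (1 : H)) ⊗ₜ[k] (1 : H) := by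
  simp [coactAlg, Bialgebra.comulAlgHom, assoc_symm_eq, Algebra.TensorProduct.one_def]

lemma rhoT_tmul_one (b : A) :
    rhoT c.ρ ((b ⊗ₜ[k] (1 : H)) : A ⊗[k] H) = c.ρ b ⊗ₜ[k] (1 : H) := by
  simp [rhoT]

lemma epsA_tmul_one (b : A) : epsA ((b ⊗ₜ[k] (1 : H)) : A ⊗[k] H) = b := by
  simp [epsA, Bialgebra.counitAlgHom, Algebra.TensorProduct.rid_tmul]

lemma coactAlg_rho (a : A) : coactAlg (c.ρ a) = rhoT c.ρ (c.ρ a) := by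
  have h2 : ComodAlg.coact2 (k := k) (H := H) (A := A) (c.ρ a)
      = LinearMap.rTensor H c.ρ.toLinearMap (c.ρ a) := by
    rw [ComodAlg.coact2]
    simp only [LinearMap.coe_comp, Function.comp_apply, LinearEquiv.coe_coe]
    rw [c.coassoc a]
    exact (TensorProduct.assoc k A H H).symm_apply_apply _
  rw [← coact2_eq, h2, rTensor_rho_eq]

/-- `d a` is grouplike. -/
lemma gl_d (a : Aˣ) : c.IsGrouplike (c.d a) := by
  rw [gl_iff, ComodAlg.d]
  have hPQ : (c.ρ ((↑a : A)) ⊗ₜ[k] (1 : H) : (A ⊗[k] H) ⊗[k] H)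
      * (c.ρ ((↑a⁻¹ : A)) ⊗ₜ[k] (1 : H)) = 1 := by
    rw [Algebra.TensorProduct.tmul_mul_tmul, ← map_mul, Units.mul_inv, map_one, mul_one,
      one_tmul_one]
  constructor
  · rw [map_mul, coactAlg_tmul_one, coactAlg_rho, tmul_one_mul, map_mul, rhoT_tmul_one]
    linear_combination (-((((↑a⁻¹ : A) ⊗ₜ[k] (1 : H)) : A ⊗[k] H) ⊗ₜ[k] (1 : H))
      * rhoT c.ρ (c.ρ (↑a : A))) * hPQ
  · rw [map_mul, epsA_tmul_one]
    have h2 : epsA (c.ρ (↑a : A)) = (↑a : A) := by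
      rw [← eps_eq]; exact c.counit_comp ↑a
    rw [h2, Units.inv_mul]

lemma d_mul_d_inv (a : Aˣ) : c.d a * c.d a⁻¹ = 1 := by
  rw [ComodAlg.d, ComodAlg.d, inv_inv]
  have h : (((↑a⁻¹ : A) ⊗ₜ[k] (1 : H)) : A ⊗[k] H) * (((↑a : A) ⊗ₜ[k] (1 : H)) : A ⊗[k] H)
      = 1 := by
    rw [Algebra.TensorProduct.tmul_mul_tmul, Units.inv_mul, mul_one]; rfl
  calc (((↑a⁻¹ : A) ⊗ₜ[k] (1 : H)) : A ⊗[k] H) * c.ρ ↑a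
        * ((((↑a : A) ⊗ₜ[k] (1 : H)) : A ⊗[k] H) * c.ρ ↑a⁻¹)
      = ((((↑a⁻¹ : A) ⊗ₜ[k] (1 : H)) : A ⊗[k] H) * (((↑a : A) ⊗ₜ[k] (1 : H)) : A ⊗[k] H))
        * (c.ρ ↑a * c.ρ ↑a⁻¹) := by ring
    _ = 1 := by rw [h, ← map_mul, Units.mul_inv, map_one, one_mul]

lemma unit_mem_AX_d (a : Aˣ) : (↑a : A) ∈ c.AX (c.d a) := by
  simp only [ComodAlg.AX, Set.mem_setOf_eq, ComodAlg.d]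
  rw [← mul_assoc, Algebra.TensorProduct.tmul_mul_tmul, Units.mul_inv, mul_one,
    show ((1 : A) ⊗ₜ[k] (1 : H) : A ⊗[k] H) = 1 from rfl, one_mul]

lemma span_top_of_unit {x : A ⊗[k] H} (a : Aˣ) (h : (↑a : A) ∈ c.AX x) :
    Ideal.span (c.AX x) = ⊤ :=
  Ideal.eq_top_of_isUnit_mem _ (Ideal.subset_span h) a.isUnit

lemma one_mem_AX_one : (1 : A) ∈ c.AX (1 : A ⊗[k] H) := by
  simp only [ComodAlg.AX, Set.mem_setOf_eq, map_one, mul_one]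
  rfl

end MyAux

/-- `A_{1⊗1} = A^{co H}`; `A_X · A_Y ⊆ A_{XY}` for grouplike `X, Y`; and the
set `E = {X ∈ Gⁱ(A⊗H) | A·A_X = A and A·A_{X⁻¹} = A}` is a subgroup of `Gⁱ(A⊗H)`
containing the image of `d : 𝔾ₘ(A) → Gⁱ(A⊗H)`. -/
theorem E_is_subgroup_containing_image_of_d
    {k H A : Type u} [CommRing k] [CommRing H] [Bialgebra k H]
    [CommRing A] [Algebra k A] (c : ComodAlg k H A) :
    c.AX (1 : A ⊗[k] H) = c.coinvSet ∧
    (∀ x y : A ⊗[k] H, c.IsGrouplike x → c.IsGrouplike y →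
      ∀ a b : A, a ∈ c.AX x → b ∈ c.AX y → a * b ∈ c.AX (x * y)) ∧
    (1 : (A ⊗[k] H)ˣ) ∈ c.Eset ∧
    (∀ u v : (A ⊗[k] H)ˣ, u ∈ c.Eset → v ∈ c.Eset → u * v ∈ c.Eset) ∧
    (∀ u : (A ⊗[k] H)ˣ, u ∈ c.Eset → u⁻¹ ∈ c.Eset) ∧
    (∀ a : Aˣ, ∃ u : (A ⊗[k] H)ˣ, (↑u : A ⊗[k] H) = c.d a ∧ u ∈ c.Eset) := by
  have hval1 : ((1 : (A ⊗[k] H)ˣ) : A ⊗[k] H) = 1 := Units.val_one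
  refine ⟨?_, ?_, ?_, ?_, ?_, ?_⟩
  · ext a
    simp only [ComodAlg.AX, ComodAlg.coinvSet, Set.mem_setOf_eq, mul_one]
  · intro x y _ _ a b ha hb
    exact MyAux.AX_mul c ha hb
  · refine ⟨by rw [hval1]; exact MyAux.gl_one c, ?_, ?_⟩
    · rw [hval1]
      exact MyAux.span_top_of_unit c 1 (by simpa using MyAux.one_mem_AX_one c)
    · rw [inv_one, hval1]
      exact MyAux.span_top_of_unit c 1 (by simpa using MyAux.one_mem_AX_one c)
  · rintro u v ⟨hu1, hu2, hu3⟩ ⟨hv1, hv2, hv3⟩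
    refine ⟨?_, ?_, ?_⟩
    · rw [Units.val_mul]
      exact MyAux.gl_mul c hu1 hv1
    · rw [Units.val_mul]
      exact MyAux.span_AX_mul c hu2 hv2
    · rw [mul_inv, Units.val_mul]
      exact MyAux.span_AX_mul c hu3 hv3
  · rintro u ⟨hu1, hu2, hu3⟩
    refine ⟨?_, hu3, by rwa [inv_inv]⟩
    have hxy : (↑u : A ⊗[k] H) * ↑u⁻¹ = 1 := by
      rw [← Units.val_mul, mul_inv_cancel, hval1]
    have h1 : MyAux.coactAlg (↑u : A ⊗[k] H) * MyAux.coactAlg (↑u⁻¹ : A ⊗[k] H) = 1 := by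
      rw [← map_mul, hxy, map_one]
    have h2 : MyAux.epsA (↑u⁻¹ : A ⊗[k] H) = 1 := by
      have he : MyAux.epsA (↑u : A ⊗[k] H) * MyAux.epsA (↑u⁻¹ : A ⊗[k] H) = 1 := by
        rw [← map_mul, hxy, map_one]
      have hu1' := ((MyAux.gl_iff c _).mp hu1).2
      rwa [hu1', one_mul] at he
    exact MyAux.gl_of_inv c hxy hu1 h1 h2
  · intro a
    refine ⟨⟨c.d a, c.d a⁻¹, MyAux.d_mul_d_inv c a,
      (mul_comm _ _).trans (MyAux.d_mul_d_inv c a)⟩, rfl, MyAux.gl_d c a, ?_, ?_⟩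
    · exact MyAux.span_top_of_unit c a (MyAux.unit_mem_AX_d c a)
    · exact MyAux.span_top_of_unit c a⁻¹ (MyAux.unit_mem_AX_d c a⁻¹)
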